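/- Let r_* be the unique positive root of the equation 1+2r−r^{3/2}=0 (r_* ≈ 4.864). Then for all real numbers z, s with 0 < z < r_* and 0 < s < r_*, one has R_L(z,s) > 0, where R_L(z,s) := (2+4z−z^{3/2})/(1+z) − s^{3/2}/(1+s). -/

import Mathlib

/-!
Write `c = √r_*`, so that `r_* ^ (3/2) = c r_* = 1 + 2 r_*` and hence `c > 2`. For `0 < x < r_*`
the chord bound `x ^ (3/2) = x √x < c x` gives
`(2 + 4z - z^{3/2})/(1+z) > (2 + (4 - c) z)/(1+z)`, and since `4 - c < 2` the right side
decreases in `z`, down to its value `(1 + 2 r_*)/(1 + r_*)` at `r_*`. The subtracted term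
`s ^ (3/2)/(1+s)` increases in `s`, up to that same value at `r_*`.
-/

/-- The step-ratio function `R_L(z,s) := (2+4z−z^{3/2})/(1+z) − s^{3/2}/(1+s)`. -/
noncomputable def RL (z s : ℝ) : ℝ :=
  (2 + 4 * z - z ^ ((3 : ℝ) / 2)) / (1 + z) - s ^ ((3 : ℝ) / 2) / (1 + s)

namespace Real

lemma rpow_three_halves {x : ℝ} (hx : 0 ≤ x) : x ^ ((3 : ℝ) / 2) = x * √x := by
  rw [show (3 : ℝ) / 2 = 1 + 1 / 2 by norm_num, rpow_add' hx (by norm_num), rpow_one,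
    sqrt_eq_rpow]

lemma four_lt_of_rpow_three_halves_eq {r : ℝ} (hr : 0 ≤ r)
    (h : r ^ ((3 : ℝ) / 2) = 1 + 2 * r) : 4 < r := by
  rw [rpow_three_halves hr] at h
  have hsq : √r ^ 2 = r := sq_sqrt hr
  have : 2 < √r := by nlinarith [sqrt_nonneg r]
  nlinarith

lemma rpow_three_halves_div_one_add_lt {s r : ℝ} (hs : 0 ≤ s) (hsr : s < r) :
    s ^ ((3 : ℝ) / 2) / (1 + s) < r ^ ((3 : ℝ) / 2) / (1 + r) := by
  have hr : 0 ≤ r := hs.trans hsr.le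
  have hsqrt : √s ≤ √r := sqrt_le_sqrt hsr.le
  have hcube : s * √s < r * √r :=
    mul_lt_mul_of_lt_of_le_of_nonneg_of_pos hsr hsqrt hs
      (sqrt_pos.2 (hs.trans_lt hsr))
  have hprod : s * r * √s ≤ s * r * √r := mul_le_mul_of_nonneg_left hsqrt (mul_nonneg hs hr)
  rw [rpow_three_halves hs, rpow_three_halves hr, div_lt_div_iff₀ (by linarith) (by linarith)]
  nlinarith

end Real

open Real in
lemma step_ratio_head_lt {z r : ℝ} (hz : 0 < z) (hzr : z < r) (hr : 4 ≤ r) :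
    (2 + 4 * r - r ^ ((3 : ℝ) / 2)) / (1 + r) < (2 + 4 * z - z ^ ((3 : ℝ) / 2)) / (1 + z) := by
  have hc : 2 ≤ √r := le_sqrt_of_sq_le (by linarith)
  have hchord : z * √z < z * √r := mul_lt_mul_of_pos_left (sqrt_lt_sqrt hz.le hzr) hz
  rw [rpow_three_halves hz.le, rpow_three_halves (by linarith),
    div_lt_div_iff₀ (by linarith) (by linarith)]
  nlinarith [mul_nonneg (sub_nonneg.2 hzr.le) (sub_nonneg.2 hc),
    mul_lt_mul_of_pos_right hchord (show 0 < 1 + r by linarith)]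

theorem RL_pos_general
    (rstar : ℝ)
    (hrstar_root : 1 + 2 * rstar - rstar ^ ((3 : ℝ) / 2) = 0)
    (z s : ℝ) (hz0 : 0 < z) (hz1 : z < rstar) (hs0 : 0 < s) (hs1 : s < rstar) :
    0 < RL z s := by
  have hroot : rstar ^ ((3 : ℝ) / 2) = 1 + 2 * rstar := by linarith
  have hr4 : 4 < rstar := Real.four_lt_of_rpow_three_halves_eq (hz0.trans hz1).le hroot
  calc (0 : ℝ)
      = (2 + 4 * rstar - rstar ^ ((3 : ℝ) / 2)) / (1 + rstar)
          - rstar ^ ((3 : ℝ) / 2) / (1 + rstar) := by rw [hroot]; ring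
    _ < RL z s := sub_lt_sub (step_ratio_head_lt hz0 hz1 hr4.le)
          (Real.rpow_three_halves_div_one_add_lt hs0.le hs1)

theorem RL_pos
    (rstar : ℝ) (hrstar_pos : 0 < rstar)
    (hrstar_root : 1 + 2 * rstar - rstar ^ ((3 : ℝ) / 2) = 0)
    (hrstar_uniq : ∀ x : ℝ, 0 < x → 1 + 2 * x - x ^ ((3 : ℝ) / 2) = 0 → x = rstar)
    (z s : ℝ) (hz0 : 0 < z) (hz1 : z < rstar) (hs0 : 0 < s) (hs1 : s < rstar) :
    0 < RL z s :=
  RL_pos_general rstar hrstar_root z s hz0 hz1 hs0 hs1
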